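/- For any r > 0 there exists C > 0 such that for all t ≥ 0 and x ∈ ℝⁿ, ∫₀^t e^{-(t−τ)/4} (1 + |x|²/(1+τ))^{-r} dτ ≤ C (1 + |x|²/(1+t))^{-r}. -/

import Mathlib

/-!
Since `τ ↦ 1 + |x|² / (1 + τ)` is decreasing and the exponent `-r` is negative, the weight
`(1 + |x|² / (1 + τ)) ^ (-r)` is bounded on `[0, t]` by its value at `τ = t`. What remains is the
integral of the exponential kernel, which is at most `4`.
-/

open Real

lemma integral_exp_neg_sub_div_le {a b c : ℝ} (hc : 0 < c) :
    ∫ τ in a..b, exp (-(b - τ) / c) ≤ c := by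
  have hkernel : (fun τ => exp (-(b - τ) / c)) = fun τ => exp (τ / c - b / c) := by
    ext τ; ring_nf
  rw [hkernel, intervalIntegral.integral_comp_div_sub (fun τ => exp τ) hc.ne', integral_exp,
    sub_self, exp_zero, smul_eq_mul]
  nlinarith [exp_pos (a / c - b / c)]

lemma one_add_div_rpow_neg_le_of_le {a p q r : ℝ} (ha : 0 ≤ a) (hp : 0 < p) (hpq : p ≤ q)
    (hr : 0 ≤ r) : (1 + a / p) ^ (-r) ≤ (1 + a / q) ^ (-r) := by
  have hq : 0 < q := hp.trans_le hpq
  exact rpow_le_rpow_of_nonpos (by positivity) (by gcongr) (neg_nonpos.mpr hr)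

theorem stmt_6 (n : ℕ) (r : ℝ) (hr : 0 < r) :
    ∃ C > 0, ∀ t : ℝ, 0 ≤ t → ∀ x : EuclideanSpace ℝ (Fin n),
      ∫ τ in (0 : ℝ)..t,
          Real.exp (-(t - τ) / 4) * (1 + ‖x‖ ^ 2 / (1 + τ)) ^ (-r) ≤
        C * (1 + ‖x‖ ^ 2 / (1 + t)) ^ (-r) := by
  refine ⟨4, by norm_num, fun t ht x => ?_⟩
  set A := (1 + ‖x‖ ^ 2 / (1 + t)) ^ (-r)
  have hintegrable : IntervalIntegrable
      (fun τ => exp (-(t - τ) / 4) * (1 + ‖x‖ ^ 2 / (1 + τ)) ^ (-r)) MeasureTheory.volume 0 t := by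
    refine ContinuousOn.intervalIntegrable fun τ hτ => ?_
    rw [Set.uIcc_of_le ht] at hτ
    have hτ_pos : 0 < 1 + τ := by linarith [hτ.1]
    have hτ_ne : 1 + τ ≠ 0 := hτ_pos.ne'
    have hbase_ne : 1 + ‖x‖ ^ 2 / (1 + τ) ≠ 0 := by positivity
    apply ContinuousAt.continuousWithinAt
    fun_prop (disch := first | exact Or.inl hbase_ne | norm_num | assumption)
  calc ∫ τ in (0 : ℝ)..t, exp (-(t - τ) / 4) * (1 + ‖x‖ ^ 2 / (1 + τ)) ^ (-r)
      ≤ ∫ τ in (0 : ℝ)..t, exp (-(t - τ) / 4) * A := by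
        refine intervalIntegral.integral_mono_on ht hintegrable
          ((by fun_prop : Continuous _).intervalIntegrable _ _) fun τ hτ => ?_
        gcongr
        exact one_add_div_rpow_neg_le_of_le (by positivity) (by linarith [hτ.1])
          (by linarith [hτ.2]) hr.le
    _ = (∫ τ in (0 : ℝ)..t, exp (-(t - τ) / 4)) * A := intervalIntegral.integral_mul_const _ _
    _ ≤ 4 * A := by gcongr; exact integral_exp_neg_sub_div_le (by norm_num)
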